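/- Let n ≥ 3, M be positive integers, A = 6M - n(n+1)(n+5), and R(n,M) the explicit degree-6 polynomial in M. If M³(n-1)²(n+4)⁴A⁷/(54·n⁴(n+1)²·R(n,M)) is a nonzero integer, then n divides 12M. -/
import Mathlib

/-- If `d ∣ n` and `d ∣ M` then `d^6` divides `R(n,M)`. -/
private lemma rdvd5 (n M d x y : ℤ) (hx : n = d * x) (hy : M = d * y) :
    d^6 ∣ (2^14*3^6*M^6 - 2^13*3^7*n*(n+1)*(n+3)*M^5 + 2^9*3^5*n^2*(n+1)*(n^4+93*n^3+629*n^2+1339*n+818)*M^4 - 2^7*3^4*n^3*(n+1)^2*(13*n^5+436*n^4+3688*n^3+12782*n^2+19163*n+9998)*M^3 + 2^2*3^3*n^4*(n+1)^3*(n+2)*(n+7)^2*(5*n^4+447*n^3+3303*n^2+7873*n+5652)*M^2 - 2^2*3^3*n^5*(n+1)^4*(n+2)^2*(n+5)^2*(n+7)^3*(3*n+5)*M + n^6*(n+1)^5*(n+2)^3*(n+5)^3*(n+7)^4) :=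
  ⟨2^14*3^6*y^6 - 2^13*3^7*x*(n+1)*(n+3)*y^5 + 2^9*3^5*x^2*(n+1)*(n^4+93*n^3+629*n^2+1339*n+818)*y^4 - 2^7*3^4*x^3*(n+1)^2*(13*n^5+436*n^4+3688*n^3+12782*n^2+19163*n+9998)*y^3 + 2^2*3^3*x^4*(n+1)^3*(n+2)*(n+7)^2*(5*n^4+447*n^3+3303*n^2+7873*n+5652)*y^2 - 2^2*3^3*x^5*(n+1)^4*(n+2)^2*(n+5)^2*(n+7)^3*(3*n+5)*y + x^6*(n+1)^5*(n+2)^3*(n+5)^3*(n+7)^4, by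
    subst hx hy; ring⟩

/-- If `9d ∣ n` and `d ∣ M` then `3^6 d^6` divides `R(n,M)`. -/
private lemma rdvd3 (n M d x y : ℤ) (hx : n = 9 * d * x) (hy : M = d * y) :
    3^6 * d^6 ∣ (2^14*3^6*M^6 - 2^13*3^7*n*(n+1)*(n+3)*M^5 + 2^9*3^5*n^2*(n+1)*(n^4+93*n^3+629*n^2+1339*n+818)*M^4 - 2^7*3^4*n^3*(n+1)^2*(13*n^5+436*n^4+3688*n^3+12782*n^2+19163*n+9998)*M^3 + 2^2*3^3*n^4*(n+1)^3*(n+2)*(n+7)^2*(5*n^4+447*n^3+3303*n^2+7873*n+5652)*M^2 - 2^2*3^3*n^5*(n+1)^4*(n+2)^2*(n+5)^2*(n+7)^3*(3*n+5)*M + n^6*(n+1)^5*(n+2)^3*(n+5)^3*(n+7)^4) :=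
  ⟨2^14*y^6 - 2^13*27*x*(n+1)*(n+3)*y^5 + 2^9*27*x^2*(n+1)*(n^4+93*n^3+629*n^2+1339*n+818)*y^4 - 2^7*81*x^3*(n+1)^2*(13*n^5+436*n^4+3688*n^3+12782*n^2+19163*n+9998)*y^3 + 2^2*243*x^4*(n+1)^3*(n+2)*(n+7)^2*(5*n^4+447*n^3+3303*n^2+7873*n+5652)*y^2 - 2^2*2187*x^5*(n+1)^4*(n+2)^2*(n+5)^2*(n+7)^3*(3*n+5)*y + 729*x^6*(n+1)^5*(n+2)^3*(n+5)^3*(n+7)^4, by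
    subst hx hy; ring⟩

/-- If `8d ∣ n` and `d ∣ M` then `2^14 d^6` divides `R(n,M)`. -/
private lemma rdvd2 (n M d x y : ℤ) (hx : n = 8 * d * x) (hy : M = d * y) :
    2^14 * d^6 ∣ (2^14*3^6*M^6 - 2^13*3^7*n*(n+1)*(n+3)*M^5 + 2^9*3^5*n^2*(n+1)*(n^4+93*n^3+629*n^2+1339*n+818)*M^4 - 2^7*3^4*n^3*(n+1)^2*(13*n^5+436*n^4+3688*n^3+12782*n^2+19163*n+9998)*M^3 + 2^2*3^3*n^4*(n+1)^3*(n+2)*(n+7)^2*(5*n^4+447*n^3+3303*n^2+7873*n+5652)*M^2 - 2^2*3^3*n^5*(n+1)^4*(n+2)^2*(n+5)^2*(n+7)^3*(3*n+5)*M + n^6*(n+1)^5*(n+2)^3*(n+5)^3*(n+7)^4) :=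
  ⟨3^6*y^6 - 4*3^7*x*(n+1)*(n+3)*y^5 + 2*3^5*x^2*(n+1)*(n^4+93*n^3+629*n^2+1339*n+818)*y^4 - 4*3^4*x^3*(n+1)^2*(13*n^5+436*n^4+3688*n^3+12782*n^2+19163*n+9998)*y^3 + 2*3^3*x^4*(n+1)^3*(4*d*x+1)*(n+7)^2*(5*n^4+447*n^3+3303*n^2+7873*n+5652)*y^2 - 32*3^3*x^5*(n+1)^4*(4*d*x+1)^2*(n+5)^2*(n+7)^3*(3*n+5)*y + 128*x^6*(n+1)^5*(4*d*x+1)^3*(n+5)^3*(n+7)^4, by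
    subst hx hy; ring⟩

private lemma case5 (p n M : ℤ) (hp : Prime p) (hp6 : ¬ p ∣ 6)
    (b : ℕ) (m : ℤ) (hm : M = p^b * m) (hpm : ¬ p ∣ m)
    (hpn : p^(b+1) ∣ n)
    (hdvd : 54*n^4*(n+1)^2*(2^14*3^6*M^6 - 2^13*3^7*n*(n+1)*(n+3)*M^5 + 2^9*3^5*n^2*(n+1)*(n^4+93*n^3+629*n^2+1339*n+818)*M^4 - 2^7*3^4*n^3*(n+1)^2*(13*n^5+436*n^4+3688*n^3+12782*n^2+19163*n+9998)*M^3 + 2^2*3^3*n^4*(n+1)^3*(n+2)*(n+7)^2*(5*n^4+447*n^3+3303*n^2+7873*n+5652)*M^2 - 2^2*3^3*n^5*(n+1)^4*(n+2)^2*(n+5)^2*(n+7)^3*(3*n+5)*M + n^6*(n+1)^5*(n+2)^3*(n+5)^3*(n+7)^4)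
      ∣ M^3*(n-1)^2*(n+4)^4*(6*M - n*(n+1)*(n+5))^7) : False := by
  obtain ⟨x, hx⟩ := hpn
  obtain ⟨Q, hQ⟩ := rdvd5 n M (p^b) (p*x) m (by rw [hx]; ring) hm
  have hD : p^4 * (p^b)^10 ∣ M^3*(n-1)^2*(n+4)^4*(6*M - n*(n+1)*(n+5))^7 :=
    dvd_trans ⟨54*x^4*(n+1)^2*Q, by rw [hQ, hx]; ring⟩ hdvd
  have hα : 6*M - n*(n+1)*(n+5) = p^b * (6*m - p*x*(n+1)*(n+5)) := by rw [hm, hx]; ring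
  generalize hu : (6*m - p*x*(n+1)*(n+5) : ℤ) = α at hα
  have hNum : M^3*(n-1)^2*(n+4)^4*(6*M - n*(n+1)*(n+5))^7
      = (p^b)^10 * (m^3*(n-1)^2*(n+4)^4*α^7) := by
    rw [hα, hm, mul_pow]; ring
  rw [hNum] at hD
  have hq0 : ((p:ℤ)^b)^10 ≠ 0 := pow_ne_zero _ (pow_ne_zero _ hp.ne_zero)
  have h4 : p^4 ∣ m^3*(n-1)^2*(n+4)^4*α^7 := by
    refine (mul_dvd_mul_iff_left hq0).mp ?_
    have he : ((p:ℤ)^b)^10 * p^4 = p^4 * (p^b)^10 := by ring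
    rw [he]; exact hD
  have hC : p ∣ m^3*(n-1)^2*(n+4)^4*α^7 :=
    dvd_trans (dvd_pow_self p (by norm_num)) h4
  have hpn' : p ∣ n := by rw [hx]; exact Dvd.dvd.mul_right (dvd_pow_self p (Nat.succ_ne_zero b)) x
  rcases hp.dvd_mul.mp hC with hC | hC
  · rcases hp.dvd_mul.mp hC with hC | hC
    · rcases hp.dvd_mul.mp hC with hC | hC
      · exact hpm (hp.dvd_of_dvd_pow hC)
      · have h1 : p ∣ (1:ℤ) := by
          have := dvd_sub hpn' (hp.dvd_of_dvd_pow hC); simpa using this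
        exact hp.not_dvd_one h1
    · have h1 : p ∣ (4:ℤ) := by
        have := dvd_sub (hp.dvd_of_dvd_pow hC) hpn'; simpa using this
      have h2 : p ∣ (2:ℤ) := hp.dvd_of_dvd_pow (show p ∣ (2:ℤ)^2 by norm_num; exact h1)
      exact hp6 (h2.trans (by norm_num))
  · have h1 : p ∣ α := hp.dvd_of_dvd_pow hC
    rw [← hu] at h1
    have h2 : p ∣ 6*m := by
      have h3 : p ∣ p*x*(n+1)*(n+5) := ⟨x*(n+1)*(n+5), by ring⟩
      have := dvd_add h1 h3
      rwa [show 6*m - p*x*(n+1)*(n+5) + p*x*(n+1)*(n+5) = 6*m from by ring] at this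
    rcases hp.dvd_mul.mp h2 with h | h
    · exact hp6 h
    · exact hpm h

private lemma case3 (n M : ℤ)
    (b : ℕ) (m : ℤ) (hm : M = 3^b * m) (hpm : ¬ (3:ℤ) ∣ m)
    (hpn : (3:ℤ)^(b+2) ∣ n)
    (hdvd : 54*n^4*(n+1)^2*(2^14*3^6*M^6 - 2^13*3^7*n*(n+1)*(n+3)*M^5 + 2^9*3^5*n^2*(n+1)*(n^4+93*n^3+629*n^2+1339*n+818)*M^4 - 2^7*3^4*n^3*(n+1)^2*(13*n^5+436*n^4+3688*n^3+12782*n^2+19163*n+9998)*M^3 + 2^2*3^3*n^4*(n+1)^3*(n+2)*(n+7)^2*(5*n^4+447*n^3+3303*n^2+7873*n+5652)*M^2 - 2^2*3^3*n^5*(n+1)^4*(n+2)^2*(n+5)^2*(n+7)^3*(3*n+5)*M + n^6*(n+1)^5*(n+2)^3*(n+5)^3*(n+7)^4)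
      ∣ M^3*(n-1)^2*(n+4)^4*(6*M - n*(n+1)*(n+5))^7) : False := by
  have hp : Prime (3:ℤ) := Int.prime_three
  obtain ⟨x, hx⟩ := hpn
  obtain ⟨Q, hQ⟩ := rdvd3 n M (3^b) x m (by rw [hx]; ring) hm
  have hD : 3^17 * ((3:ℤ)^b)^10 ∣ M^3*(n-1)^2*(n+4)^4*(6*M - n*(n+1)*(n+5))^7 :=
    dvd_trans ⟨2*x^4*(n+1)^2*Q, by rw [hQ, hx]; ring⟩ hdvd
  have hα : 6*M - n*(n+1)*(n+5) = 3*3^b * (2*m - 3*x*(n+1)*(n+5)) := by rw [hm, hx]; ring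
  generalize hu : (2*m - 3*x*(n+1)*(n+5) : ℤ) = α at hα
  have hNum : M^3*(n-1)^2*(n+4)^4*(6*M - n*(n+1)*(n+5))^7
      = 3^7 * ((3:ℤ)^b)^10 * (m^3*(n-1)^2*(n+4)^4*α^7) := by
    rw [hα, hm, mul_pow]; ring
  rw [hNum] at hD
  have hq0 : (3:ℤ)^7 * ((3:ℤ)^b)^10 ≠ 0 := by positivity
  have h4 : (3:ℤ)^10 ∣ m^3*(n-1)^2*(n+4)^4*α^7 := by
    refine (mul_dvd_mul_iff_left hq0).mp ?_
    have he : (3:ℤ)^7 * ((3:ℤ)^b)^10 * 3^10 = 3^17 * ((3:ℤ)^b)^10 := by ring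
    rw [he]; exact hD
  have hC : (3:ℤ) ∣ m^3*(n-1)^2*(n+4)^4*α^7 :=
    dvd_trans (dvd_pow_self 3 (by norm_num)) h4
  have hpn' : (3:ℤ) ∣ n := by
    rw [hx]; exact Dvd.dvd.mul_right (dvd_pow_self 3 (by omega)) x
  rcases hp.dvd_mul.mp hC with hC | hC
  · rcases hp.dvd_mul.mp hC with hC | hC
    · rcases hp.dvd_mul.mp hC with hC | hC
      · exact hpm (hp.dvd_of_dvd_pow hC)
      · have h1 : (3:ℤ) ∣ (1:ℤ) := by
          have := dvd_sub hpn' (hp.dvd_of_dvd_pow hC); simpa using this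
        norm_num at h1
    · have h1 : (3:ℤ) ∣ (4:ℤ) := by
        have := dvd_sub (hp.dvd_of_dvd_pow hC) hpn'; simpa using this
      norm_num at h1
  · have h1 : (3:ℤ) ∣ α := hp.dvd_of_dvd_pow hC
    rw [← hu] at h1
    have h2 : (3:ℤ) ∣ 2*m := by
      have h3 : (3:ℤ) ∣ 3*x*(n+1)*(n+5) := ⟨x*(n+1)*(n+5), by ring⟩
      have := dvd_add h1 h3
      rwa [show 2*m - 3*x*(n+1)*(n+5) + 3*x*(n+1)*(n+5) = 2*m from by ring] at this
    rcases hp.dvd_mul.mp h2 with h | h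
    · norm_num at h
    · exact hpm h

private lemma case2 (n M : ℤ)
    (b : ℕ) (m : ℤ) (hm : M = 2^b * m) (hpm : ¬ (2:ℤ) ∣ m)
    (hpn : (2:ℤ)^(b+3) ∣ n)
    (hdvd : 54*n^4*(n+1)^2*(2^14*3^6*M^6 - 2^13*3^7*n*(n+1)*(n+3)*M^5 + 2^9*3^5*n^2*(n+1)*(n^4+93*n^3+629*n^2+1339*n+818)*M^4 - 2^7*3^4*n^3*(n+1)^2*(13*n^5+436*n^4+3688*n^3+12782*n^2+19163*n+9998)*M^3 + 2^2*3^3*n^4*(n+1)^3*(n+2)*(n+7)^2*(5*n^4+447*n^3+3303*n^2+7873*n+5652)*M^2 - 2^2*3^3*n^5*(n+1)^4*(n+2)^2*(n+5)^2*(n+7)^3*(3*n+5)*M + n^6*(n+1)^5*(n+2)^3*(n+5)^3*(n+7)^4)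
      ∣ M^3*(n-1)^2*(n+4)^4*(6*M - n*(n+1)*(n+5))^7) : False := by
  have hp : Prime (2:ℤ) := Int.prime_two
  obtain ⟨x, hx⟩ := hpn
  obtain ⟨Q, hQ⟩ := rdvd2 n M (2^b) x m (by rw [hx]; ring) hm
  have hD : 2^27 * ((2:ℤ)^b)^10 ∣ M^3*(n-1)^2*(n+4)^4*(6*M - n*(n+1)*(n+5))^7 :=
    dvd_trans ⟨27*x^4*(n+1)^2*Q, by rw [hQ, hx]; ring⟩ hdvd
  have hα : 6*M - n*(n+1)*(n+5) = 2*2^b * (3*m - 4*x*(n+1)*(n+5)) := by rw [hm, hx]; ring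
  generalize hu : (3*m - 4*x*(n+1)*(n+5) : ℤ) = α at hα
  have hn4 : n + 4 = 4*(2*2^b*x+1) := by rw [hx]; ring
  generalize hv : (2*2^b*x+1 : ℤ) = u at hn4
  have hNum : M^3*(n-1)^2*(n+4)^4*(6*M - n*(n+1)*(n+5))^7
      = 2^15 * ((2:ℤ)^b)^10 * (m^3*(n-1)^2*u^4*α^7) := by
    rw [hα, hn4, hm, mul_pow, mul_pow]; ring
  rw [hNum] at hD
  have hq0 : (2:ℤ)^15 * ((2:ℤ)^b)^10 ≠ 0 := by positivity
  have h4 : (2:ℤ)^12 ∣ m^3*(n-1)^2*u^4*α^7 := by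
    refine (mul_dvd_mul_iff_left hq0).mp ?_
    have he : (2:ℤ)^15 * ((2:ℤ)^b)^10 * 2^12 = 2^27 * ((2:ℤ)^b)^10 := by ring
    rw [he]; exact hD
  have hC : (2:ℤ) ∣ m^3*(n-1)^2*u^4*α^7 :=
    dvd_trans (dvd_pow_self 2 (by norm_num)) h4
  have hpn' : (2:ℤ) ∣ n := by
    rw [hx]; exact Dvd.dvd.mul_right (dvd_pow_self 2 (by omega)) x
  rcases hp.dvd_mul.mp hC with hC | hC
  · rcases hp.dvd_mul.mp hC with hC | hC
    · rcases hp.dvd_mul.mp hC with hC | hC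
      · exact hpm (hp.dvd_of_dvd_pow hC)
      · have h1 : (2:ℤ) ∣ (1:ℤ) := by
          have := dvd_sub hpn' (hp.dvd_of_dvd_pow hC); simpa using this
        norm_num at h1
    · have h1 : (2:ℤ) ∣ u := hp.dvd_of_dvd_pow hC
      rw [← hv] at h1
      have h2 : (2:ℤ) ∣ (1:ℤ) := (dvd_add_right ⟨2^b*x, by ring⟩).mp h1
      norm_num at h2
  · have h1 : (2:ℤ) ∣ α := hp.dvd_of_dvd_pow hC
    rw [← hu] at h1
    have h2 : (2:ℤ) ∣ 3*m := by
      have h3 : (2:ℤ) ∣ 4*x*(n+1)*(n+5) := ⟨2*x*(n+1)*(n+5), by ring⟩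
      have := dvd_add h1 h3
      rwa [show 3*m - 4*x*(n+1)*(n+5) + 4*x*(n+1)*(n+5) = 3*m from by ring] at this
    rcases hp.dvd_mul.mp h2 with h | h
    · norm_num at h
    · exact hpm h

theorem stmt (n M : ℤ) (hn : 3 ≤ n) (hM : 0 < M)
    (A : ℤ) (hA : A = 6*M - n*(n+1)*(n+5))
    (R : ℤ) (hR : R = 2^14*3^6*M^6 - 2^13*3^7*n*(n+1)*(n+3)*M^5 + 2^9*3^5*n^2*(n+1)*(n^4+93*n^3+629*n^2+1339*n+818)*M^4 - 2^7*3^4*n^3*(n+1)^2*(13*n^5+436*n^4+3688*n^3+12782*n^2+19163*n+9998)*M^3 + 2^2*3^3*n^4*(n+1)^3*(n+2)*(n+7)^2*(5*n^4+447*n^3+3303*n^2+7873*n+5652)*M^2 - 2^2*3^3*n^5*(n+1)^4*(n+2)^2*(n+5)^2*(n+7)^3*(3*n+5)*M + n^6*(n+1)^5*(n+2)^3*(n+5)^3*(n+7)^4)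
    (hint : ∃ k : ℤ, k ≠ 0 ∧
      ((M^3*(n-1)^2*(n+4)^4*A^7 : ℚ) / (54*n^4*(n+1)^2*R) = (k : ℚ))) :
    n ∣ 12 * M := by
  obtain ⟨k, hk0, hk⟩ := hint
  have hk' : ((M^3*(n-1)^2*(n+4)^4*A^7 : ℤ) : ℚ) / ((54*n^4*(n+1)^2*R : ℤ) : ℚ) = (k : ℚ) := by
    push_cast; exact hk
  have hdvd : (54*n^4*(n+1)^2*R : ℤ) ∣ M^3*(n-1)^2*(n+4)^4*A^7 := by
    by_cases hD : (54*n^4*(n+1)^2*R : ℤ) = 0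
    · exfalso
      rw [hD] at hk'
      simp at hk'
      exact hk0 (by exact_mod_cast hk'.symm)
    · have h1 : ((M^3*(n-1)^2*(n+4)^4*A^7 : ℤ) : ℚ) = (k : ℚ) * ((54*n^4*(n+1)^2*R : ℤ) : ℚ) :=
        (div_eq_iff (by exact_mod_cast hD)).mp hk'
      have h2 : (M^3*(n-1)^2*(n+4)^4*A^7 : ℤ) = k * (54*n^4*(n+1)^2*R) := by exact_mod_cast h1
      exact ⟨k, by rw [h2]; ring⟩
  subst hA hR
  have hn0 : n ≠ 0 := by omega
  have h12M : (12*M : ℤ) ≠ 0 := by positivity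
  rw [← Int.natAbs_dvd_natAbs,
    ← Nat.factorization_le_iff_dvd (Int.natAbs_ne_zero.mpr hn0) (Int.natAbs_ne_zero.mpr h12M)]
  refine Finsupp.le_def.mpr fun p => ?_
  by_cases hp : p.Prime
  · rw [← hp.pow_dvd_iff_le_factorization (Int.natAbs_ne_zero.mpr h12M)]
    set a := n.natAbs.factorization p with ha
    have hpa : (p:ℤ)^a ∣ n := by
      have h := Nat.ordProj_dvd n.natAbs p
      have h2 : ((p^a : ℕ) : ℤ) ∣ n := Int.natCast_dvd.mpr h
      exact_mod_cast h2
    suffices hs : (p:ℤ)^a ∣ 12*M by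
      have : ((p^a : ℕ) : ℤ) ∣ 12*M := by exact_mod_cast hs
      exact Int.natCast_dvd.mp this
    have hM0 : M.natAbs ≠ 0 := Int.natAbs_ne_zero.mpr (by omega)
    set b := M.natAbs.factorization p with hb
    have hb1 : (p:ℤ)^b ∣ M := by
      have h := Nat.ordProj_dvd M.natAbs p
      have h2 : ((p^b : ℕ) : ℤ) ∣ M := Int.natCast_dvd.mpr h
      exact_mod_cast h2
    have hb2 : ¬ (p:ℤ)^(b+1) ∣ M := by
      intro hc
      have h2 : ((p^(b+1) : ℕ) : ℤ) ∣ M := by exact_mod_cast hc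
      exact Nat.pow_succ_factorization_not_dvd hM0 hp (Int.natCast_dvd.mp h2)
    obtain ⟨m, hm⟩ := hb1
    have hpm : ¬ (p:ℤ) ∣ m := by
      rintro ⟨c, hc⟩
      exact hb2 ⟨c, by rw [hm, hc]; ring⟩
    have hpz : Prime (p:ℤ) := Nat.prime_iff_prime_int.mp hp
    by_cases hp2 : p = 2
    · subst hp2
      by_cases hab : a ≤ b + 2
      · exact dvd_trans (pow_dvd_pow _ hab) ⟨3*m, by rw [hm]; push_cast; ring⟩
      · exfalso
        refine case2 n M b m (by exact_mod_cast hm) (by exact_mod_cast hpm) ?_ (by exact_mod_cast hdvd)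
        have : ((2:ℕ):ℤ)^(b+3) ∣ n := dvd_trans (pow_dvd_pow _ (by omega)) hpa
        exact_mod_cast this
    · by_cases hp3 : p = 3
      · subst hp3
        by_cases hab : a ≤ b + 1
        · exact dvd_trans (pow_dvd_pow _ hab) ⟨4*m, by rw [hm]; push_cast; ring⟩
        · exfalso
          refine case3 n M b m (by exact_mod_cast hm) (by exact_mod_cast hpm) ?_ (by exact_mod_cast hdvd)
          have : ((3:ℕ):ℤ)^(b+2) ∣ n := dvd_trans (pow_dvd_pow _ (by omega)) hpa
          exact_mod_cast this
      · have hp6 : ¬ (p:ℤ) ∣ 6 := by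
          intro h
          have h6 : p ∣ 6 := by
            have := Int.natCast_dvd.mp h
            simpa using this
          have h6' : p ∣ 2*3 := (by norm_num : (6:ℕ) = 2*3) ▸ h6
          rcases (Nat.Prime.dvd_mul hp).mp h6' with h' | h'
          · exact hp2 ((Nat.prime_dvd_prime_iff_eq hp Nat.prime_two).mp h')
          · exact hp3 ((Nat.prime_dvd_prime_iff_eq hp Nat.prime_three).mp h')
        by_cases hab : a ≤ b
        · exact dvd_trans (pow_dvd_pow _ hab) ⟨12*m, by rw [hm]; ring⟩
        · exfalso
          exact case5 (p:ℤ) n M hpz hp6 b m hm hpm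
            (dvd_trans (pow_dvd_pow _ (by omega)) hpa) hdvd
  · simp [Nat.factorization_eq_zero_of_not_prime _ hp]
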